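/- arXiv:1906.08683 — 5 statements merged into one kernel-verified Lean document; each statement's English description precedes it below -/
import Mathlib

section
/- Let p be a prime, let r be a positive integer, let V ⊆ ℤ_p^r be a subset, and let S ⊆ ℕ be a subset. For each 1 ≤ k ≤ r, let P_k ∈ ℤ_p⟨z⟩ be a strictly convergent power series, and define P : S → ℤ_p^r by P(n) = (P₁(n), …, P_r(n)). Suppose that the set {n ∈ S : P(n) = y} is empty whenever y ∈ ℤ_p^r \ V and is finite whenever y ∈ V. Then there exists N ≥ 0 such that #{n ∈ S : P(n) = y} ≤ N for every y ∈ V. -/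
open Filter

variable {p : ℕ} [Fact p.Prime]

/-- A sequence of coefficients in `ℤ_p` is strictly convergent if `|a_m|_p → 0`;
such a sequence is the coefficient sequence of an element of the Tate algebra `ℤ_p⟨z⟩`. -/
def StrictlyConvergent (a : ℕ → ℤ_[p]) : Prop :=
  Tendsto (fun m => ‖a m‖) atTop (nhds 0)

/-- Evaluation of a strictly convergent power series (given by its coefficients) at a point
of `ℤ_p`. -/
noncomputable def scEval (a : ℕ → ℤ_[p]) (x : ℤ_[p]) : ℤ_[p] :=
  ∑' m : ℕ, a m * x ^ m

/-!
If some `P k` has a nonzero coefficient in positive degree, Strassmann's theorem bounds the number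
of solutions in `ℤ_p` of `P k (x) = y k` by an integer independent of `y`; otherwise `P` is constant
and at most one fibre is nonempty. Strassmann's theorem goes by induction on the Strassmann index
`N`, the last index at which `‖b N‖` is maximal: dividing out a zero `α` as
`f(x) - f(α) = (x - α) g(x)` lowers the index by one, and at index `0` the constant term strictly
dominates every other term, so there is no zero.
-/

open Topology IsUltrametricDist

theorem exists_forall_norm_le_of_tendsto_zero {E : Type*} [SeminormedAddGroup E] {f : ℕ → E}
    (hf : Tendsto f atTop (𝓝 0)) : ∃ n₀, ∀ n, ‖f n‖ ≤ ‖f n₀‖ := by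
  by_cases! h : ∀ n, ‖f n‖ = 0
  · exact ⟨0, fun n => (h n).trans (h 0).symm |>.le⟩
  obtain ⟨n₁, hn₁⟩ := h
  have hpos : 0 < ‖f n₁‖ := (norm_nonneg _).lt_of_ne' hn₁
  refine continuous_of_discreteTopology.exists_forall_ge' n₁ ?_
  rw [cocompact_eq_atTop]
  exact (tendsto_zero_iff_norm_tendsto_zero.mp hf).eventually (eventually_le_nhds hpos)

theorem norm_tsum_lt_of_forall_norm_lt {E : Type*} [SeminormedAddCommGroup E]
    [IsUltrametricDist E] {f : ℕ → E} (hf : Tendsto f atTop (𝓝 0)) {C : ℝ}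
    (h : ∀ n, ‖f n‖ < C) : ‖∑' n, f n‖ < C := by
  obtain ⟨n₀, hn₀⟩ := exists_forall_norm_le_of_tendsto_zero hf
  exact (norm_tsum_le_of_forall_le hn₀).trans_lt (h n₀)

theorem PadicInt.norm_mul_le_norm_left (a x : ℤ_[p]) : ‖a * x‖ ≤ ‖a‖ := by
  rw [norm_mul]
  exact mul_le_of_le_one_right (norm_nonneg a) x.norm_le_one

theorem PadicInt.norm_mul_le_norm_right (x a : ℤ_[p]) : ‖x * a‖ ≤ ‖a‖ :=
  mul_comm a x ▸ norm_mul_le_norm_left a x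

namespace StrictlyConvergent

variable {a : ℕ → ℤ_[p]}

theorem iff_tendsto : StrictlyConvergent a ↔ Tendsto a atTop (𝓝 0) :=
  tendsto_zero_iff_norm_tendsto_zero.symm

theorem mul_pow (ha : StrictlyConvergent a) (x : ℤ_[p]) :
    StrictlyConvergent fun m => a m * x ^ m :=
  squeeze_zero (fun _ => norm_nonneg _) (fun _ => PadicInt.norm_mul_le_norm_left _ _) ha

theorem summable (ha : StrictlyConvergent a) : Summable a :=
  NonarchimedeanAddGroup.summable_of_tendsto_cofinite_zero <|
    Nat.cofinite_eq_atTop ▸ iff_tendsto.mp ha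

theorem comp_add_right (ha : StrictlyConvergent a) (k : ℕ) :
    StrictlyConvergent fun m => a (m + k) :=
  ha.comp (tendsto_add_atTop_nat k)

theorem update (ha : StrictlyConvergent a) (c : ℤ_[p]) :
    StrictlyConvergent (Function.update a 0 c) :=
  ha.congr' <| (eventually_ne_atTop 0).mono fun m hm => by
    simp only [Function.update_of_ne hm]

end StrictlyConvergent

section scEval

variable {a b : ℕ → ℤ_[p]}

theorem summable_scEval (ha : StrictlyConvergent a) (x : ℤ_[p]) :
    Summable fun m => a m * x ^ m :=
  (ha.mul_pow x).summable

theorem norm_scEval_le (x : ℤ_[p]) {C : ℝ} (h : ∀ m, ‖a m‖ ≤ C) : ‖scEval a x‖ ≤ C :=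
  norm_tsum_le_of_forall_le fun m => (PadicInt.norm_mul_le_norm_left _ _).trans (h m)

theorem norm_scEval_lt (ha : StrictlyConvergent a) (x : ℤ_[p]) {C : ℝ} (h : ∀ m, ‖a m‖ < C) :
    ‖scEval a x‖ < C :=
  norm_tsum_lt_of_forall_norm_lt (StrictlyConvergent.iff_tendsto.mp (ha.mul_pow x))
    fun m => (PadicInt.norm_mul_le_norm_left _ _).trans_lt (h m)

theorem scEval_eq_add_mul (ha : StrictlyConvergent a) (x : ℤ_[p]) :
    scEval a x = a 0 + x * scEval (fun m => a (m + 1)) x := by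
  rw [scEval, (summable_scEval ha x).tsum_eq_zero_add, scEval,
    ← (summable_scEval (ha.comp_add_right 1) x).tsum_mul_left, pow_zero, mul_one]
  exact congrArg _ (tsum_congr fun m => by ring)

theorem scEval_add_mul (ha : StrictlyConvergent a) (hb : StrictlyConvergent b) (c x : ℤ_[p]) :
    scEval (fun m => a m + c * b m) x = scEval a x + c * scEval b x := by
  rw [scEval, scEval, scEval, ← (summable_scEval hb x).tsum_mul_left,
    ← (summable_scEval ha x).tsum_add ((summable_scEval hb x).mul_left c)]
  exact tsum_congr fun m => by ring

theorem scEval_update_zero (ha : StrictlyConvergent a) (c x : ℤ_[p]) :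
    scEval (Function.update a 0 c) x = scEval a x - a 0 + c := by
  rw [scEval_eq_add_mul (ha.update c), scEval_eq_add_mul ha, Function.update_self]
  simp only [Function.update_of_ne (Nat.succ_ne_zero _)]
  ring

end scEval

/-- The coefficients of `(f(x) - f(α)) / (x - α)`, where `f = scEval b`. -/
noncomputable def quotSeries (b : ℕ → ℤ_[p]) (α : ℤ_[p]) (i : ℕ) : ℤ_[p] :=
  scEval (fun j => b (j + (i + 1))) α

section quotSeries

variable {b : ℕ → ℤ_[p]}

theorem norm_quotSeries_le (α : ℤ_[p]) (i : ℕ) {C : ℝ} (h : ∀ m, i < m → ‖b m‖ ≤ C) :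
    ‖quotSeries b α i‖ ≤ C :=
  norm_scEval_le α fun j => h _ (by omega)

theorem norm_quotSeries_lt (hb : StrictlyConvergent b) (α : ℤ_[p]) (i : ℕ) {C : ℝ}
    (h : ∀ m, i < m → ‖b m‖ < C) : ‖quotSeries b α i‖ < C :=
  norm_scEval_lt (hb.comp_add_right _) α fun j => h _ (by omega)

theorem quotSeries_eq_add_mul (hb : StrictlyConvergent b) (α : ℤ_[p]) (i : ℕ) :
    quotSeries b α i = b (i + 1) + α * quotSeries b α (i + 1) := by
  rw [quotSeries, scEval_eq_add_mul (hb.comp_add_right _), zero_add, quotSeries]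
  congr 3
  ext j
  congr 1
  omega

theorem mul_quotSeries_zero (hb : StrictlyConvergent b) (α : ℤ_[p]) :
    α * quotSeries b α 0 = scEval b α - b 0 := by
  rw [scEval_eq_add_mul hb, quotSeries]
  ring

theorem strictlyConvergent_quotSeries (hb : StrictlyConvergent b) (α : ℤ_[p]) :
    StrictlyConvergent (quotSeries b α) := by
  refine tendsto_order.2 ⟨fun ε hε => .of_forall fun _ => hε.trans_le (norm_nonneg _),
    fun ε hε => ?_⟩
  obtain ⟨K, hK⟩ := eventually_atTop.mp (hb.eventually (gt_mem_nhds hε))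
  exact eventually_atTop.mpr
    ⟨K, fun i hi => norm_quotSeries_lt hb α i fun m hm => hK m (by omega)⟩

theorem scEval_sub_scEval (hb : StrictlyConvergent b) (α x : ℤ_[p]) :
    scEval b x - scEval b α = (x - α) * scEval (quotSeries b α) x := by
  have hc := strictlyConvergent_quotSeries hb α
  have hsplit : scEval (quotSeries b α) x =
      scEval (fun i => b (i + 1)) x + α * scEval (fun i => quotSeries b α (i + 1)) x := by
    rw [← scEval_add_mul (hb.comp_add_right 1) (hc.comp_add_right 1)]
    exact congrArg (scEval · x) (funext (quotSeries_eq_add_mul hb α))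
  -- `quotSeries_eq_add_mul` makes the product telescope.
  linear_combination scEval_eq_add_mul hb x + mul_quotSeries_zero hb α - x * hsplit +
    α * scEval_eq_add_mul hc x

end quotSeries

def IsStrassmannIndex (b : ℕ → ℤ_[p]) (N : ℕ) : Prop :=
  (∀ m, ‖b m‖ ≤ ‖b N‖) ∧ ∀ m, N < m → ‖b m‖ < ‖b N‖

section Strassmann

variable {b : ℕ → ℤ_[p]}

theorem exists_isStrassmannIndex (hb : StrictlyConvergent b) (hne : b ≠ 0) :
    ∃ N, IsStrassmannIndex b N := by
  obtain ⟨n₀, hn₀⟩ := exists_forall_norm_le_of_tendsto_zero (StrictlyConvergent.iff_tendsto.mp hb)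
  have hpos : 0 < ‖b n₀‖ := by
    obtain ⟨m, hm⟩ := Function.ne_iff.mp hne
    exact (norm_pos_iff.mpr hm).trans_le (hn₀ m)
  have hfin : {m | ‖b n₀‖ ≤ ‖b m‖}.Finite := by
    have := hb.eventually (gt_mem_nhds hpos)
    rw [← Nat.cofinite_eq_atTop, eventually_cofinite] at this
    simpa only [not_lt] using this
  obtain ⟨N, hN, hmax⟩ := hfin.exists_maximal ⟨n₀, (le_rfl : ‖b n₀‖ ≤ _)⟩
  refine ⟨N, fun m => (hn₀ m).trans hN, fun m hm => lt_of_not_ge fun hmN => ?_⟩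
  exact hm.not_ge (hmax (hN.trans hmN) hm.le)

theorem isStrassmannIndex_quotSeries (hb : StrictlyConvergent b) {N : ℕ}
    (hN : IsStrassmannIndex b (N + 1)) (α : ℤ_[p]) : IsStrassmannIndex (quotSeries b α) N := by
  have htail : ‖α * quotSeries b α (N + 1)‖ < ‖b (N + 1)‖ :=
    (PadicInt.norm_mul_le_norm_right _ _).trans_lt (norm_quotSeries_lt hb α _ hN.2)
  have hnorm : ‖quotSeries b α N‖ = ‖b (N + 1)‖ := by
    rw [quotSeries_eq_add_mul hb, norm_add_eq_max_of_norm_ne_norm htail.ne', max_eq_left htail.le]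
  refine ⟨fun m => hnorm ▸ norm_quotSeries_le α m fun k _ => hN.1 k,
    fun m hm => hnorm ▸ norm_quotSeries_lt hb α m fun k hk => hN.2 k (by omega)⟩

theorem encard_zeros_le (hb : StrictlyConvergent b) {N : ℕ} (hN : IsStrassmannIndex b N) :
    {x | scEval b x = 0}.encard ≤ N := by
  induction N generalizing b with
  | zero =>
    suffices {x | scEval b x = 0} = ∅ by simp [this]
    refine Set.eq_empty_of_forall_notMem fun x hx => ?_
    have htail : ‖x * scEval (fun m => b (m + 1)) x‖ < ‖b 0‖ :=
      (PadicInt.norm_mul_le_norm_right _ _).trans_lt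
        (norm_scEval_lt (hb.comp_add_right 1) x fun m => hN.2 _ m.succ_pos)
    replace hx : scEval b x = 0 := hx
    rw [scEval_eq_add_mul hb, add_eq_zero_iff_eq_neg] at hx
    rw [hx, norm_neg] at htail
    exact htail.false
  | succ N ih =>
    rcases Set.eq_empty_or_nonempty {x | scEval b x = 0} with h | ⟨α, hα⟩
    · simp [h]
    have hsub : {x | scEval b x = 0} ⊆ insert α {x | scEval (quotSeries b α) x = 0} := by
      intro x hx
      have hfactor := scEval_sub_scEval hb α x
      rw [show scEval b x = 0 from hx, show scEval b α = 0 from hα, sub_zero, eq_comm,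
        mul_eq_zero, sub_eq_zero] at hfactor
      exact hfactor
    calc {x | scEval b x = 0}.encard
        ≤ {x | scEval (quotSeries b α) x = 0}.encard + 1 :=
          (Set.encard_le_encard hsub).trans (Set.encard_insert_le _ _)
      _ ≤ N + 1 := by
          gcongr
          exact ih (strictlyConvergent_quotSeries hb α) (isStrassmannIndex_quotSeries hb hN α)
      _ = ↑(N + 1) := by push_cast; rfl

end Strassmann

theorem scEval_eq_coeff_zero {a : ℕ → ℤ_[p]} (ha : ∀ m, 0 < m → a m = 0) (x : ℤ_[p]) :
    scEval a x = a 0 := by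
  rw [scEval, tsum_eq_single 0 fun m hm => by rw [ha m (Nat.pos_of_ne_zero hm), zero_mul],
    pow_zero, mul_one]

/-- Changing the constant term keeps the Strassmann index below any `K` past which
`‖a m‖ < ‖a m₀‖`, so one bound serves every equation `f(x) = y`. -/
theorem exists_forall_encard_scEval_eq_le {a : ℕ → ℤ_[p]} (ha : StrictlyConvergent a) {m₀ : ℕ}
    (hm₀ : 0 < m₀) (hne : a m₀ ≠ 0) : ∃ K : ℕ, ∀ y, {x | scEval a x = y}.encard ≤ K := by
  obtain ⟨K, hK⟩ := eventually_atTop.mp (ha.eventually (gt_mem_nhds (norm_pos_iff.mpr hne)))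
  refine ⟨K, fun y => ?_⟩
  set b := Function.update a 0 (a 0 - y)
  have hb : StrictlyConvergent b := ha.update _
  have hba : ∀ m, m ≠ 0 → b m = a m := fun m hm => Function.update_of_ne hm _ _
  obtain ⟨N, hN⟩ := exists_isStrassmannIndex hb fun h => hne (hba m₀ hm₀.ne' ▸ congrFun h m₀)
  have hNK : N < K := by
    by_contra! hKN
    have hm₀K : m₀ < K := lt_of_not_ge fun h => (hK m₀ h).false
    have hlt := hK N hKN
    rw [← hba N (by omega), ← hba m₀ hm₀.ne'] at hlt
    exact (hN.1 m₀).not_gt hlt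
  have hfiber : {x | scEval a x = y} = {x | scEval b x = 0} := Set.ext fun x => by
    change scEval a x = y ↔ scEval b x = 0
    rw [scEval_update_zero ha, sub_add_sub_cancel, sub_eq_zero]
  rw [hfiber]
  exact (encard_zeros_le hb hN).trans (by exact_mod_cast hNK.le)

theorem uniform_bound_piecewise_analytic_general
    (p : ℕ) [Fact p.Prime] (r : ℕ)
    (V : Set (Fin r → ℤ_[p])) (S : Set ℕ)
    (P : Fin r → ℕ → ℤ_[p]) (hP : ∀ k, StrictlyConvergent (P k)) :
    ∃ N : ℕ, ∀ y ∈ V, {n ∈ S | (fun k => scEval (P k) (n : ℤ_[p])) = y}.ncard ≤ N := by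
  by_cases! hconst : ∀ k m, 0 < m → P k m = 0
  · have hval (n : ℕ) : (fun k => scEval (P k) (n : ℤ_[p])) = fun k => P k 0 :=
      funext fun k => scEval_eq_coeff_zero (hconst k) _
    refine ⟨S.ncard, fun y _ => ?_⟩
    simp only [hval]
    by_cases h : (fun k => P k 0) = y <;> simp [h]
  · obtain ⟨k, m, hm, hne⟩ := hconst
    obtain ⟨K, hK⟩ := exists_forall_encard_scEval_eq_le (hP k) hm hne
    refine ⟨K, fun y _ => ?_⟩
    have hmaps : Set.MapsTo (Nat.cast : ℕ → ℤ_[p])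
        {n ∈ S | (fun k => scEval (P k) (n : ℤ_[p])) = y} {x | scEval (P k) x = y k} :=
      fun n hn => congrFun hn.2 k
    exact_mod_cast (Set.ncard_le_encard _).trans
      ((Set.encard_le_encard_of_injOn hmaps Nat.cast_injective.injOn).trans (hK (y k)))

/-- a uniform bound for the number of solutions of `P(n) = y`, `n ∈ S`, for a
tuple `P` of strictly convergent `p`-adic power series, provided each such solution set is
finite (and empty for `y ∉ V`). -/
theorem uniform_bound_piecewise_analytic
    (p : ℕ) [Fact p.Prime] (r : ℕ) (hr : 0 < r)
    (V : Set (Fin r → ℤ_[p])) (S : Set ℕ)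
    (P : Fin r → ℕ → ℤ_[p]) (hP : ∀ k, StrictlyConvergent (P k))
    (hempty : ∀ y ∉ V, {n ∈ S | (fun k => scEval (P k) (n : ℤ_[p])) = y} = ∅)
    (hfin : ∀ y ∈ V, {n ∈ S | (fun k => scEval (P k) (n : ℤ_[p])) = y}.Finite) :
    ∃ N : ℕ, ∀ y ∈ V, {n ∈ S | (fun k => scEval (P k) (n : ℤ_[p])) = y}.ncard ≤ N :=
  uniform_bound_piecewise_analytic_general p r V S P hP
end

section
/- Let X be an irreducible quasi-projective variety over a field K of characteristic 0, let Φ : X → X be an endomorphism, and let x ∈ X(K) be a point whose orbit O_Φ(x) is Zariski dense in X. Let Z be a proper closed subvariety of X. Then the set {n ∈ ℕ : Φ^n(x) ∈ Z} contains no infinite arithmetic progression; that is, there do not exist integers a ≥ 1 and b ≥ 0 such that Φ^{an+b}(x) ∈ Z for every n ∈ ℕ. -/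
open AlgebraicGeometry CategoryTheory Limits MvPolynomial

attribute [local instance] MvPolynomial.gradedAlgebra

/-- Projective `n`-space over a commutative ring `R`, obtained by base change of
`Proj ℤ[X₀,…,Xₙ]` along `Spec R ⟶ Spec ℤ`. -/
noncomputable def ProjSpace (R : Type) [CommRing R] (n : ℕ) : Scheme :=
  pullback
    (specZIsTerminal.from (Proj (homogeneousSubmodule (Fin (n + 1)) ℤ)))
    (specZIsTerminal.from (Spec (CommRingCat.of R)))

/-- The structure morphism of projective `n`-space over `R`. -/
noncomputable def ProjSpace.structMap (R : Type) [CommRing R] (n : ℕ) :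
    ProjSpace R n ⟶ Spec (CommRingCat.of R) :=
  pullback.snd _ _

/-- A scheme `X` over `Spec R` (with structure morphism `sX`) is a quasi-projective variety
over `R` if it is reduced and admits a locally closed immersion over `R` into some projective
space `ℙⁿ_R`. -/
def IsQuasiProjectiveVarietyOver (R : Type) [CommRing R] {X : Scheme}
    (sX : X ⟶ Spec (CommRingCat.of R)) : Prop :=
  IsReduced X ∧ ∃ (n : ℕ) (g : X ⟶ ProjSpace R n),
    IsImmersion g ∧ g ≫ ProjSpace.structMap R n = sX

/-- The `n`-th iterate of an endomorphism of a scheme. -/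
def iterHom {X : Scheme} (Φ : X ⟶ X) : ℕ → (X ⟶ X)
  | 0 => 𝟙 X
  | n + 1 => iterHom Φ n ≫ Φ

/-!
Once the orbit points are known to be closed, the argument is purely topological. A `K`-point is
a section of the separated structure morphism, hence a closed immersion, so every `Φⁿ(x)` is a
closed point. Suppose `Φ^(an+b)(x) ∈ Z` for all `n`. The orbit from `b` on is the union of the `a`
classes `{Φ^(an+b+k)(x)}`, `k < a`, so the irreducible space `X`, being the closure of the orbit,
is covered by finitely many closed points and the closures `V_k` of these classes. No closed point
is all of `X` (it has a point outside `Z` and the point `Φᵇ(x)` inside), so some `V_k = X`. Then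
`Φ^(a-k)` maps `V_k` into the closure of the progression, i.e. `Φ^(a-k)(X) ⊆ Z`; so the orbit from
`a - k` on lies in `Z`, and the same covering argument gives `Z = X`.
-/

section Irreducible

open Set

variable {Y : Type*} [TopologicalSpace Y] [IrreducibleSpace Y]

lemma IrreducibleSpace.exists_eq_univ_of_univ_subset_biUnion {ι : Type*} (s : Finset ι)
    {F : ι → Set Y} (hF : ∀ i ∈ s, IsClosed (F i)) (hcov : univ ⊆ ⋃ i ∈ s, F i) :
    ∃ i ∈ s, F i = univ := by
  classical
  obtain ⟨_, hz, hsub⟩ := isIrreducible_iff_sUnion_isClosed.mp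
    (IrreducibleSpace.isIrreducible_univ Y) (s.image F) (by simpa using hF) (by simpa using hcov)
  obtain ⟨i, hi, rfl⟩ := Finset.mem_image.mp hz
  exact ⟨i, hi, univ_subset_iff.mp hsub⟩

lemma exists_eq_univ_of_denseRange_of_tail_mem_biUnion [Nontrivial Y] {u : ℕ → Y}
    (hu : DenseRange u) (hclosed : ∀ n, IsClosed {u n}) {ι : Type*} (s : Finset ι)
    {F : ι → Set Y} (hF : ∀ i ∈ s, IsClosed (F i)) {N : ℕ}
    (htail : ∀ n ≥ N, u n ∈ ⋃ i ∈ s, F i) : ∃ i ∈ s, F i = univ := by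
  let G : ℕ ⊕ ι → Set Y := Sum.elim (fun m ↦ {u m}) F
  have hG : ∀ j ∈ (Finset.range N).disjSum s, IsClosed (G j) := by
    rintro (m | i) hj
    · exact hclosed m
    · exact hF i (Finset.inr_mem_disjSum.mp hj)
  have hrange : range u ⊆ ⋃ j ∈ (Finset.range N).disjSum s, G j := by
    rintro _ ⟨n, rfl⟩
    rcases lt_or_ge n N with hn | hn
    · exact mem_biUnion (Finset.inl_mem_disjSum.mpr (Finset.mem_range.mpr hn)) rfl
    · obtain ⟨i, hi, hni⟩ := mem_iUnion₂.mp (htail n hn)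
      exact mem_biUnion (Finset.inr_mem_disjSum.mpr hi) hni
  have hcov : univ ⊆ ⋃ j ∈ (Finset.range N).disjSum s, G j := by
    rw [← hu.closure_range]
    exact closure_minimal hrange (isClosed_biUnion_finset hG)
  obtain ⟨m | i, hj, hGj⟩ := IrreducibleSpace.exists_eq_univ_of_univ_subset_biUnion _ hG hcov
  · exact absurd hGj (singleton_ne_univ _)
  · exact ⟨i, Finset.inr_mem_disjSum.mp hj, hGj⟩

theorem eq_univ_of_forall_iterate_mul_add_mem {f : Y → Y} (hf : Continuous f) {y : Y}
    (hdense : DenseRange fun n ↦ f^[n] y) (hclosed : ∀ n, IsClosed {f^[n] y})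
    {Z : Set Y} (hZ : IsClosed Z) {a b : ℕ} (ha : 0 < a) (hmem : ∀ n, f^[a * n + b] y ∈ Z) :
    Z = univ := by
  by_contra hZne
  obtain ⟨z, hz⟩ := (ne_univ_iff_exists_notMem Z).mp hZne
  have : Nontrivial Y := nontrivial_of_ne _ _ (ne_of_mem_of_not_mem (hmem 0) hz)
  obtain ⟨k, hk, hV⟩ : ∃ k ∈ Finset.range a,
      closure (range fun n ↦ f^[a * n + b + k] y) = univ := by
    refine exists_eq_univ_of_denseRange_of_tail_mem_biUnion hdense hclosed _
      (fun _ _ ↦ isClosed_closure) (N := b) fun n hn ↦ ?_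
    refine mem_biUnion (Finset.mem_range.mpr (Nat.mod_lt (n - b) ha))
      (subset_closure ⟨(n - b) / a, ?_⟩)
    have := Nat.div_add_mod (n - b) a
    dsimp only
    congr 1
    omega
  have hshift : ∀ w, f^[a - k] w ∈ Z := by
    have hsub : closure (range fun n ↦ f^[a * n + b + k] y) ⊆ f^[a - k] ⁻¹' Z := by
      refine closure_minimal ?_ (hZ.preimage (hf.iterate _))
      rintro _ ⟨n, rfl⟩
      have hk' := Finset.mem_range.mp hk
      have : a - k + (a * n + b + k) = a * (n + 1) + b := by rw [Nat.mul_succ]; omega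
      simpa only [mem_preimage, ← Function.iterate_add_apply, this] using hmem (n + 1)
    exact fun w ↦ hsub (hV ▸ mem_univ w)
  obtain ⟨_, -, hZuniv⟩ := exists_eq_univ_of_denseRange_of_tail_mem_biUnion hdense hclosed
    {()} (fun _ _ ↦ hZ) (F := fun _ ↦ Z) (N := a - k) fun n hn ↦ by
      simpa [← Function.iterate_add_apply, Nat.add_sub_cancel' hn] using hshift (f^[n - (a - k)] y)
  exact hZne hZuniv

end Irreducible

instance ProjSpace.isSeparated_structMap (R : Type) [CommRing R] (n : ℕ) :
    IsSeparated (ProjSpace.structMap R n) :=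
  inferInstanceAs (IsSeparated (pullback.snd _ _))

lemma IsQuasiProjectiveVarietyOver.isSeparated {R : Type} [CommRing R] {X : Scheme}
    {sX : X ⟶ Spec (CommRingCat.of R)} (h : IsQuasiProjectiveVarietyOver R sX) :
    IsSeparated sX := by
  obtain ⟨-, n, g, hg, rfl⟩ := h
  infer_instance

lemma isClosed_range_base_of_comp_eq_id {X S : Scheme} {s : X ⟶ S} [IsSeparated s]
    {σ : S ⟶ X} (hσ : σ ≫ s = 𝟙 S) : IsClosed (Set.range σ.base) := by
  have : IsClosedImmersion (σ ≫ s) := by rw [hσ]; infer_instance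
  have := IsClosedImmersion.of_comp σ s
  exact σ.isClosedEmbedding.isClosed_range

lemma iterHom_comp_of_comp_eq {X S : Scheme} {Φ : X ⟶ X} {s : X ⟶ S} (hΦ : Φ ≫ s = s) (n : ℕ) :
    iterHom Φ n ≫ s = s := by
  induction n with
  | zero => exact Category.id_comp s
  | succ n ih => rw [iterHom, Category.assoc, hΦ, ih]

lemma iterHom_base_apply {X : Scheme} (Φ : X ⟶ X) (n : ℕ) (z : X) :
    (iterHom Φ n).base z = Φ.base^[n] z := by
  induction n with
  | zero => rfl
  | succ n ih => rw [Function.iterate_succ_apply', ← ih]; rfl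

lemma range_comp_iterHom_base {S X : Scheme} [Unique S] (x : S ⟶ X) (Φ : X ⟶ X) (n : ℕ) :
    Set.range (x ≫ iterHom Φ n).base = {Φ.base^[n] (x.base default)} := by
  rw [Set.range_unique, Scheme.Hom.comp_apply, iterHom_base_apply]

theorem no_arithmetic_progression_in_return_set_of_dense_orbit_general
    (K : Type) [Field K]
    (X : Scheme) [IrreducibleSpace X]
    (sX : X ⟶ Spec (CommRingCat.of K))
    (hXqp : IsQuasiProjectiveVarietyOver K sX)
    (Φ : X ⟶ X) (hΦ : Φ ≫ sX = sX)
    (x : Spec (CommRingCat.of K) ⟶ X) (hx : x ≫ sX = 𝟙 _)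
    (hdense : Dense (⋃ n : ℕ, Set.range (x ≫ iterHom Φ n).base))
    (Z : Set X) (hZclosed : IsClosed Z) (hZproper : Z ≠ Set.univ) :
    ¬ ∃ a b : ℕ, 1 ≤ a ∧ ∀ n : ℕ, Set.range (x ≫ iterHom Φ (a * n + b)).base ⊆ Z := by
  rintro ⟨a, b, ha, hsub⟩
  have := hXqp.isSeparated
  have hrange : ∀ n, Set.range (x ≫ iterHom Φ n).base = {Φ.base^[n] (x.base default)} :=
    range_comp_iterHom_base x Φ
  refine hZproper (eq_univ_of_forall_iterate_mul_add_mem (y := x.base default) (b := b)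
    Φ.base.hom.continuous ?_ (fun n ↦ ?_) hZclosed ha fun n ↦ ?_)
  · rw [DenseRange, ← Set.iUnion_singleton_eq_range]
    simpa only [hrange] using hdense
  · rw [← hrange]
    exact isClosed_range_base_of_comp_eq_id
      (by rw [Category.assoc, iterHom_comp_of_comp_eq hΦ, hx])
  · simpa only [hrange, Set.singleton_subset_iff] using hsub n

/-- let `X` be an irreducible quasi-projective variety over a field `K` of
characteristic zero, `Φ` an endomorphism of `X` over `K`, and `x ∈ X(K)` a point with Zariski
dense orbit.  If `Z` is a proper closed subvariety of `X`, then the return set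
`{n : Φⁿ(x) ∈ Z}` contains no infinite arithmetic progression `{an + b : n ∈ ℕ}` with
`a ≥ 1`. -/
theorem no_arithmetic_progression_in_return_set_of_dense_orbit
    (K : Type) [Field K] [CharZero K]
    (X : Scheme) [IrreducibleSpace X]
    (sX : X ⟶ Spec (CommRingCat.of K))
    (hXqp : IsQuasiProjectiveVarietyOver K sX)
    (Φ : X ⟶ X) (hΦ : Φ ≫ sX = sX)
    (x : Spec (CommRingCat.of K) ⟶ X) (hx : x ≫ sX = 𝟙 _)
    (hdense : Dense (⋃ n : ℕ, Set.range (x ≫ iterHom Φ n).base))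
    (Z : Set X) (hZclosed : IsClosed Z) (hZproper : Z ≠ Set.univ) :
    ¬ ∃ a b : ℕ, 1 ≤ a ∧ ∀ n : ℕ, Set.range (x ≫ iterHom Φ (a * n + b)).base ⊆ Z :=
  no_arithmetic_progression_in_return_set_of_dense_orbit_general K X sX hXqp Φ hΦ x hx hdense Z
    hZclosed hZproper
end

section
/- Let K be a number field equipped with a field embedding σ : K ↪ ℚ_p for some prime p. Then there exists a constant c₅ > 0, depending only on K and σ, such that for every natural number n and every nonzero α ∈ K with |σ(α)|_p ≤ p^{−n}, one has h(α) ≥ c₅·n, where h denotes the logarithmic Weil height. -/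
/-!
If `|σ α|_p ≤ p^{-n}`, then for every `x` in the denominator ideal `𝔡` of `α` the algebraic
integer `x α` lies in the kernel of `𝓞 K → ℤ_p → ℤ/p^nℤ`, an ideal of norm `p^n`. Hence `p^n`
divides the norm of the numerator ideal `𝔡 α`, which is `N(𝔡) |N_{K/ℚ}(α)|`. Bounding
`|N_{K/ℚ}(α)| = ∏_w w(α)^{mult w}` by `∏_w max(w(α), 1)^{mult w}` and taking logarithms gives
`n log p ≤ [K:ℚ] h(α)`, so `c₅ = log p / [K:ℚ]` works.
-/

open NumberField
open scoped nonZeroDivisors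

/-- The denominator ideal of an element `α` of a number field `K`: the ideal of all
algebraic integers `x` such that `x * α` is again an algebraic integer. -/
noncomputable def denIdeal (K : Type*) [Field K] [NumberField K] (α : K) :
    Ideal (𝓞 K) where
  carrier := {x | ∃ y : 𝓞 K, (algebraMap (𝓞 K) K y) = (algebraMap (𝓞 K) K x) * α}
  add_mem' := by
    rintro a b ⟨ya, ha⟩ ⟨yb, hb⟩
    exact ⟨ya + yb, by rw [map_add, map_add, ha, hb]; ring⟩
  zero_mem' := ⟨0, by simp⟩
  smul_mem' := by
    rintro c x ⟨y, hy⟩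
    exact ⟨c * y, by rw [smul_eq_mul, map_mul, map_mul, hy]; ring⟩

/-- The absolute logarithmic Weil height of an element of a number field, defined as
`(1/[K:ℚ]) * (∑_{w infinite} mult(w) log⁺ w(α) + log N(denominator ideal of α))`. -/
noncomputable def weilHeight (K : Type*) [Field K] [NumberField K] (α : K) : ℝ :=
  (Module.finrank ℚ K : ℝ)⁻¹ *
    ((∑ w : InfinitePlace K, (w.mult : ℝ) * Real.log (max (w α) 1)) +
      Real.log (Ideal.absNorm (denIdeal K α)))

section NumeratorIdeal

variable (K : Type*) [Field K] [NumberField K]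

noncomputable def numIdeal (α : K) : Ideal (𝓞 K) where
  carrier := {y | ∃ x ∈ denIdeal K α, (algebraMap (𝓞 K) K y) = (algebraMap (𝓞 K) K x) * α}
  add_mem' := by
    rintro a b ⟨xa, hxa, ha⟩ ⟨xb, hxb, hb⟩
    exact ⟨xa + xb, add_mem hxa hxb, by rw [map_add, map_add, ha, hb]; ring⟩
  zero_mem' := ⟨0, zero_mem _, by simp⟩
  smul_mem' := by
    rintro c y ⟨x, hx, hxy⟩
    exact ⟨c * x, (denIdeal K α).mul_mem_left c hx,
      by rw [smul_eq_mul, map_mul, map_mul, hxy]; ring⟩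

theorem coe_numIdeal (α : K) :
    (numIdeal K α : FractionalIdeal (𝓞 K)⁰ K) =
      FractionalIdeal.spanSingleton (𝓞 K)⁰ α * (denIdeal K α : FractionalIdeal (𝓞 K)⁰ K) := by
  ext z
  simp only [FractionalIdeal.mem_singleton_mul, FractionalIdeal.mem_coeIdeal]
  constructor
  · rintro ⟨y, ⟨x, hx, hxy⟩, rfl⟩
    exact ⟨_, ⟨x, hx, rfl⟩, by rw [hxy, mul_comm]⟩
  · rintro ⟨_, ⟨x, hx, rfl⟩, rfl⟩
    obtain ⟨y, hy⟩ := id hx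
    exact ⟨y, ⟨x, hx, hy⟩, by rw [hy, mul_comm]⟩

theorem absNorm_numIdeal (α : K) :
    (Ideal.absNorm (numIdeal K α) : ℚ) =
      |Algebra.norm ℚ α| * Ideal.absNorm (denIdeal K α) := by
  simpa only [map_mul, FractionalIdeal.coeIdeal_absNorm,
    FractionalIdeal.absNorm_span_singleton] using
    congrArg FractionalIdeal.absNorm (coe_numIdeal K α)

theorem denIdeal_ne_bot (α : K) : denIdeal K α ≠ ⊥ := by
  obtain ⟨b, a, ha⟩ := IsLocalization.exists_integer_multiple (𝓞 K)⁰ α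
  have hb : (b : 𝓞 K) ∈ denIdeal K α := ⟨a, by rw [ha, Algebra.smul_def]⟩
  intro h
  rw [h, Ideal.mem_bot] at hb
  exact nonZeroDivisors.coe_ne_zero b hb

theorem absNorm_numIdeal_pos {α : K} (hα : α ≠ 0) : 0 < Ideal.absNorm (numIdeal K α) := by
  have hden : 0 < Ideal.absNorm (denIdeal K α) :=
    Nat.pos_of_ne_zero (mt Ideal.absNorm_eq_zero_iff.mp (denIdeal_ne_bot K α))
  have hnorm : 0 < |Algebra.norm ℚ α| := abs_pos.mpr (Algebra.norm_ne_zero_iff.mpr hα)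
  have h : (0 : ℚ) < Ideal.absNorm (numIdeal K α) := by
    rw [absNorm_numIdeal]
    positivity
  exact_mod_cast h

theorem absNorm_numIdeal_le_prod_max (α : K) :
    (Ideal.absNorm (numIdeal K α) : ℝ) ≤
      (∏ w : InfinitePlace K, max (w α) 1 ^ w.mult) * Ideal.absNorm (denIdeal K α) := by
  have h := congrArg (Rat.cast : ℚ → ℝ) (absNorm_numIdeal K α)
  push_cast at h
  rw [h, ← Rat.cast_abs, ← InfinitePlace.prod_eq_abs_norm]
  gcongr with w
  exact le_max_left _ _

theorem log_absNorm_numIdeal_le {α : K} (hα : α ≠ 0) :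
    Real.log (Ideal.absNorm (numIdeal K α)) ≤ Module.finrank ℚ K * weilHeight K α := by
  have hd : (Module.finrank ℚ K : ℝ) ≠ 0 := by exact_mod_cast Module.finrank_pos.ne'
  have hden : (Ideal.absNorm (denIdeal K α) : ℝ) ≠ 0 := by
    exact_mod_cast mt Ideal.absNorm_eq_zero_iff.mp (denIdeal_ne_bot K α)
  have hmax : ∀ w : InfinitePlace K, max (w α) 1 ^ w.mult ≠ 0 :=
    fun w => pow_ne_zero _ (lt_of_lt_of_le one_pos (le_max_right _ _)).ne'
  calc Real.log (Ideal.absNorm (numIdeal K α))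
      ≤ Real.log ((∏ w : InfinitePlace K, max (w α) 1 ^ w.mult) *
          Ideal.absNorm (denIdeal K α)) :=
        Real.log_le_log (by exact_mod_cast absNorm_numIdeal_pos K hα)
          (absNorm_numIdeal_le_prod_max K α)
    _ = Module.finrank ℚ K * weilHeight K α := by
        rw [weilHeight, mul_inv_cancel_left₀ hd, Real.log_mul (Finset.prod_ne_zero_iff.mpr
          fun w _ => hmax w) hden, Real.log_prod fun w _ => hmax w]
        simp only [Real.log_pow]

end NumeratorIdeal

section PadicEmbedding

variable (p : ℕ) [Fact p.Prime] {K : Type*} [Field K] (σ : K →+* ℚ_[p])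

theorem norm_map_algebraMap_le_one (x : 𝓞 K) : ‖σ (algebraMap (𝓞 K) K x)‖ ≤ 1 := by
  have hx : IsIntegral ℤ_[p] (σ (algebraMap (𝓞 K) K x)) :=
    ((RingOfIntegers.isIntegral_coe x).map σ.toIntAlgHom).tower_top
  obtain ⟨y, hy⟩ := IsIntegrallyClosed.isIntegral_iff.mp hx
  exact hy ▸ y.norm_le_one

noncomputable def RingOfIntegers.toPadicInt : 𝓞 K →+* ℤ_[p] where
  toFun x := ⟨σ (algebraMap (𝓞 K) K x), norm_map_algebraMap_le_one p σ x⟩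
  map_one' := Subtype.ext (by simp)
  map_mul' x y := Subtype.ext (by simp; rfl)
  map_zero' := Subtype.ext (by simp)
  map_add' x y := Subtype.ext (by simp; rfl)

variable [NumberField K]

theorem absNorm_ker_toZModPow_comp (f : 𝓞 K →+* ℤ_[p]) (n : ℕ) :
    Ideal.absNorm (RingHom.ker ((PadicInt.toZModPow n).comp f)) = p ^ n := by
  have hsurj : Function.Surjective ((PadicInt.toZModPow n).comp f) := fun z => by
    obtain ⟨m, rfl⟩ := ZMod.intCast_surjective z
    exact ⟨m, map_intCast _ m⟩
  rw [Ideal.absNorm_apply, Submodule.cardQuot_apply,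
    Nat.card_congr (RingHom.quotientKerEquivOfSurjective hsurj).toEquiv, Nat.card_zmod]

theorem numIdeal_le_ker_toZModPow {n : ℕ} {α : K} (hα : ‖σ α‖ ≤ (p : ℝ) ^ (-(n : ℤ))) :
    numIdeal K α ≤ RingHom.ker ((PadicInt.toZModPow n).comp (RingOfIntegers.toPadicInt p σ)) := by
  rintro y ⟨x, -, hxy⟩
  rw [RingHom.mem_ker, RingHom.comp_apply, ← RingHom.mem_ker, PadicInt.ker_toZModPow,
    ← PadicInt.norm_le_pow_iff_mem_span_pow]
  change ‖σ (algebraMap (𝓞 K) K y)‖ ≤ _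
  rw [hxy, map_mul, norm_mul]
  exact (mul_le_of_le_one_left (norm_nonneg _) (norm_map_algebraMap_le_one p σ x)).trans hα

theorem pow_dvd_absNorm_numIdeal {n : ℕ} {α : K} (hα : ‖σ α‖ ≤ (p : ℝ) ^ (-(n : ℤ))) :
    p ^ n ∣ Ideal.absNorm (numIdeal K α) :=
  absNorm_ker_toZModPow_comp p (RingOfIntegers.toPadicInt p σ) n ▸
    Ideal.absNorm_dvd_absNorm_of_le (numIdeal_le_ker_toZModPow p σ hα)

end PadicEmbedding

/-- if `K` is a number field with an embedding `σ : K ↪ ℚ_p`, then there is a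
constant `c₅ > 0` such that any nonzero `α ∈ K` with `|σ(α)|_p ≤ p^{-n}` has `h(α) ≥ c₅ n`. -/
theorem height_lower_bound_of_small_padic_norm
    (p : ℕ) [Fact p.Prime] (K : Type*) [Field K] [NumberField K]
    (σ : K →+* ℚ_[p]) :
    ∃ c₅ : ℝ, 0 < c₅ ∧ ∀ n : ℕ, ∀ α : K, α ≠ 0 →
      ‖σ α‖ ≤ (p : ℝ) ^ (-(n : ℤ)) → c₅ * n ≤ weilHeight K α := by
  have hp : 1 < (p : ℝ) := by exact_mod_cast (Fact.out : p.Prime).one_lt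
  have hd : 0 < (Module.finrank ℚ K : ℝ) := by exact_mod_cast Module.finrank_pos
  refine ⟨Real.log p / Module.finrank ℚ K, div_pos (Real.log_pos hp) hd,
    fun n α hα hσα => ?_⟩
  have hpow : (p : ℝ) ^ n ≤ Ideal.absNorm (numIdeal K α) := by
    exact_mod_cast Nat.le_of_dvd (absNorm_numIdeal_pos K hα) (pow_dvd_absNorm_numIdeal p σ hσα)
  have hlog : n * Real.log p ≤ Module.finrank ℚ K * weilHeight K α :=
    calc n * Real.log p = Real.log ((p : ℝ) ^ n) := by rw [Real.log_pow]
      _ ≤ Real.log (Ideal.absNorm (numIdeal K α)) := Real.log_le_log (by positivity) hpow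
      _ ≤ Module.finrank ℚ K * weilHeight K α := log_absNorm_numIdeal_le K hα
  rw [div_mul_eq_mul_div, div_le_iff₀ hd]
  linarith
end

section
/- Let Φ : 𝔸³ → 𝔸³ be the morphism defined by Φ(x, y, z) = (yz, xz, z+1), and let c = (0, 1, 1). Then for every n ≥ 0, Φ^{2n}(c) = (0, (2n)!, 2n+1) and Φ^{2n+1}(c) = ((2n+1)!, 0, 2n+2). -/
/-- for the morphism `Φ : 𝔸³ → 𝔸³`, `Φ(x, y, z) = (yz, xz, z+1)` (described on
points over a field of characteristic zero) and `c = (0, 1, 1)`, one has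
`Φ^{2n}(c) = (0, (2n)!, 2n+1)` and `Φ^{2n+1}(c) = ((2n+1)!, 0, 2n+2)` for all `n ≥ 0`. -/
theorem iterates_of_affine_three_space_example
    (K : Type*) [Field K] [CharZero K]
    (Φ : K × K × K → K × K × K)
    (hΦ : ∀ x y z : K, Φ (x, y, z) = (y * z, x * z, z + 1))
    (c : K × K × K) (hc : c = (0, 1, 1)) :
    ∀ n : ℕ,
      Φ^[2 * n] c = ((0 : K), ((2 * n).factorial : K), ((2 * n + 1 : ℕ) : K)) ∧
      Φ^[2 * n + 1] c = (((2 * n + 1).factorial : K), (0 : K), ((2 * n + 2 : ℕ) : K)) := by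
  intro n
  induction n with
  | zero =>
    constructor
    · simp [hc]
    · simp only [Nat.mul_zero, Nat.zero_add, Function.iterate_one, hc, hΦ]
      norm_num
  | succ n ih =>
    obtain ⟨h1, h2⟩ := ih
    have key2 : 2 * (n + 1) = (2 * n + 1) + 1 := by ring
    constructor
    · rw [key2, Function.iterate_succ_apply', h2, hΦ]
      simp [Nat.factorial_succ]
      exact ⟨by ring, by ring⟩
    · rw [key2, Function.iterate_succ_apply', Function.iterate_succ_apply', h2, hΦ, hΦ]
      simp [Nat.factorial_succ]
      exact ⟨by ring, by ring⟩
end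

section
/- Let Φ : 𝔸³ → 𝔸³ be the morphism defined by Φ(x, y, z) = (yz, xz, z+1), let c = (0, 1, 1), and let f : 𝔸³ → 𝔸¹ be given by f(x, y, z) = x + 1. Then f(Φ^{2n}(c)) = 1 and f(Φ^{2n+1}(c)) = (2n+1)! + 1 for every n ≥ 0, and consequently liminf_{n→∞} h(f(Φ^n(c)))/log(n) = 0 while limsup_{n→∞} h(f(Φ^n(c)))/log(n) = ∞. -/
open NumberField Filter
open scoped IntermediateField

/-- The absolute logarithmic Weil height of an algebraic number, computed in
the number field `ℚ(α)`. -/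
noncomputable def absHeight (α : AlgebraicClosure ℚ) : ℝ :=
  letI : FiniteDimensional ℚ ℚ⟮α⟯ :=
    IntermediateField.adjoin.finiteDimensional
      ((AlgebraicClosure.isAlgebraic ℚ).isAlgebraic α).isIntegral
  letI : NumberField ℚ⟮α⟯ := ⟨⟩
  weilHeight ℚ⟮α⟯ (IntermediateField.AdjoinSimple.gen ℚ α)

/-!
The orbit of `(0, 1, 1)` alternates between `(0, n!, n + 1)` and `(n!, 0, n + 1)`, so `f` takes
the value `1` at even times and `n! + 1` at odd times. An integer `m` has trivial denominator
ideal and absolute value `|m|` at every archimedean place, so `h(m) = log |m|`. Hence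
`h(f(Φⁿ(c))) / log n` vanishes along even `n`, while along odd `n` Stirling's bound
`log n! ≥ n log n - n` makes it at least `n / 2`.
-/

open scoped Nat

theorem iterate_apply_zero_one_one {A : Type*} [CommSemiring A] (Φ : A × A × A → A × A × A)
    (hΦ : ∀ x y z : A, Φ (x, y, z) = (y * z, x * z, z + 1)) (n : ℕ) :
    Φ^[n] (0, 1, 1) =
      if Even n then (0, (n ! : A), (n : A) + 1) else ((n ! : A), 0, (n : A) + 1) := by
  induction n with
  | zero => simp
  | succ n ih =>
    rw [Function.iterate_succ_apply', ih]
    by_cases hn : Even n <;> simp [hn, hΦ, Nat.even_add_one, Nat.factorial_succ, mul_comm]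

section WeilHeight
variable {K : Type*} [Field K] [NumberField K]

theorem denIdeal_intCast (z : ℤ) : denIdeal K z = ⊤ :=
  Ideal.eq_top_iff_one _ |>.2 ⟨z, by simp⟩

theorem log_max_norm_intCast_one (z : ℤ) : Real.log (max ‖z‖ 1) = Real.log z := by
  rcases eq_or_ne z 0 with rfl | hz
  · simp -- `Real.log 0 = 0`
  · rw [Int.norm_eq_abs, max_eq_left (mod_cast Int.one_le_abs hz), Real.log_abs]

theorem weilHeight_intCast (z : ℤ) : weilHeight K z = Real.log z := by
  have hd : (Module.finrank ℚ K : ℝ) ≠ 0 := by exact_mod_cast Module.finrank_pos.ne'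
  simp only [weilHeight, denIdeal_intCast, Ideal.absNorm_top, Nat.cast_one, Real.log_one, add_zero,
    InfinitePlace.map_intCast, log_max_norm_intCast_one, ← Finset.sum_mul, ← Nat.cast_sum,
    InfinitePlace.sum_mult_eq]
  field_simp

end WeilHeight

theorem absHeight_intCast (z : ℤ) : absHeight z = Real.log z := by
  have hgen : IntermediateField.AdjoinSimple.gen ℚ (z : AlgebraicClosure ℚ) = z :=
    Subtype.ext (by simp)
  have : FiniteDimensional ℚ ℚ⟮(z : AlgebraicClosure ℚ)⟯ :=
    IntermediateField.adjoin.finiteDimensional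
      ((AlgebraicClosure.isAlgebraic ℚ).isAlgebraic (z : AlgebraicClosure ℚ)).isIntegral
  have : NumberField ℚ⟮(z : AlgebraicClosure ℚ)⟯ := ⟨⟩
  rw [absHeight, hgen, weilHeight_intCast]

theorem absHeight_natCast (n : ℕ) : absHeight n = Real.log n := by
  exact_mod_cast absHeight_intCast n

theorem half_le_log_factorial_div_log {n : ℕ} (hn : Real.exp 2 ≤ n) :
    (n : ℝ) / 2 ≤ Real.log n ! / Real.log n := by
  have hlog : 2 ≤ Real.log n := by
    simpa using Real.log_le_log (Real.exp_pos 2) hn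
  have hn0 : n ≠ 0 := by rintro rfl; simp at hn; linarith [Real.exp_pos 2]
  have hstirling := Stirling.le_log_factorial_stirling hn0
  have h2π : 0 ≤ Real.log (2 * Real.pi) := Real.log_nonneg (by linarith [Real.pi_gt_three])
  rw [le_div_iff₀ (by linarith)]
  nlinarith [(Nat.cast_nonneg n : (0:ℝ) ≤ n)]

theorem tendsto_log_factorial_add_one_div_log :
    Tendsto (fun n : ℕ => Real.log (n ! + 1 : ℕ) / Real.log n) atTop atTop := by
  refine tendsto_atTop_mono' _ ?_ (tendsto_natCast_atTop_atTop.atTop_div_const two_pos)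
  filter_upwards [tendsto_natCast_atTop_atTop.eventually_ge_atTop (Real.exp 2)] with n hn
  refine (half_le_log_factorial_div_log hn).trans
    (div_le_div_of_nonneg_right ?_ (Real.log_natCast_nonneg n))
  exact Real.log_le_log (by positivity) (mod_cast (n !).le_succ)

theorem liminf_eq_of_eventually_ge_of_frequently_eq {α β : Type*} [CompleteLinearOrder β]
    {l : Filter α} {u : α → β} {b : β} (hge : ∀ᶠ x in l, b ≤ u x) (heq : ∃ᶠ x in l, u x = b) :
    liminf u l = b :=
  le_antisymm (liminf_le_of_frequently_le' (heq.mono fun _ h => h.le))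
    (le_liminf_of_le (by isBoundedDefault) hge)

theorem limsup_coe_eq_top_of_tendsto_comp {α ι : Type*} {l : Filter α} {l' : Filter ι} [l'.NeBot]
    {s : α → ℝ} {g : ι → α} (hg : Tendsto g l' l) (hs : Tendsto (s ∘ g) l' atTop) :
    limsup (fun x => (s x : EReal)) l = ⊤ := by
  refine EReal.eq_top_iff_forall_lt _ |>.2 fun y => ?_
  have hfreq : ∃ᶠ x in l, ((y + 1 : ℝ) : EReal) ≤ s x :=
    hg.frequently ((hs.eventually_ge_atTop (y + 1)).frequently.mono fun _ h => EReal.coe_le_coe h)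
  exact (EReal.coe_lt_coe (lt_add_one y)).trans_le (le_limsup_of_frequently_le' hfreq)

/-- for `Φ(x,y,z) = (yz, xz, z+1)` on `𝔸³`, `c = (0,1,1)` and
`f(x,y,z) = x + 1`, one has `f(Φ^{2n}(c)) = 1` and `f(Φ^{2n+1}(c)) = (2n+1)! + 1`, and
consequently `liminf h(f(Φⁿ(c)))/log n = 0` while `limsup h(f(Φⁿ(c)))/log n = ∞`. -/
theorem liminf_zero_limsup_infinite_example
    (Φ : (AlgebraicClosure ℚ) × (AlgebraicClosure ℚ) × (AlgebraicClosure ℚ) →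
         (AlgebraicClosure ℚ) × (AlgebraicClosure ℚ) × (AlgebraicClosure ℚ))
    (hΦ : ∀ x y z : AlgebraicClosure ℚ, Φ (x, y, z) = (y * z, x * z, z + 1))
    (c : (AlgebraicClosure ℚ) × (AlgebraicClosure ℚ) × (AlgebraicClosure ℚ))
    (hc : c = (0, 1, 1))
    (f : (AlgebraicClosure ℚ) × (AlgebraicClosure ℚ) × (AlgebraicClosure ℚ) →
         AlgebraicClosure ℚ)
    (hf : ∀ x y z : AlgebraicClosure ℚ, f (x, y, z) = x + 1) :
    (∀ n : ℕ, f (Φ^[2 * n] c) = 1 ∧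
      f (Φ^[2 * n + 1] c) = (((2 * n + 1).factorial : AlgebraicClosure ℚ) + 1)) ∧
    liminf (fun n : ℕ => ((absHeight (f (Φ^[n] c)) / Real.log n : ℝ) : EReal)) atTop = 0 ∧
    limsup (fun n : ℕ => ((absHeight (f (Φ^[n] c)) / Real.log n : ℝ) : EReal)) atTop = ⊤ := by
  subst hc
  have hheight (n : ℕ) :
      absHeight (f (Φ^[n] (0, 1, 1))) = Real.log (if Even n then 1 else n ! + 1 : ℕ) := by
    rw [iterate_apply_zero_one_one Φ hΦ, ← absHeight_natCast]
    split_ifs <;> simp [hf]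
  have hodd_tendsto : Tendsto (fun k : ℕ => 2 * k + 1) atTop atTop :=
    tendsto_atTop_mono (fun k => show k ≤ 2 * k + 1 by omega) tendsto_id
  refine ⟨fun n => ?_, ?_, ?_⟩
  · rw [iterate_apply_zero_one_one Φ hΦ, iterate_apply_zero_one_one Φ hΦ,
      if_pos (even_two_mul n), if_neg (Nat.not_even_two_mul_add_one n), hf, hf, zero_add]
    exact ⟨rfl, rfl⟩
  · refine liminf_eq_of_eventually_ge_of_frequently_eq (.of_forall fun n => ?_)
      (frequently_atTop.2 fun N => ⟨2 * N, by omega, ?_⟩)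
    · exact EReal.coe_nonneg.2 <| hheight n ▸
        div_nonneg (Real.log_natCast_nonneg _) (Real.log_natCast_nonneg n)
    · simp [hheight]
  · refine limsup_coe_eq_top_of_tendsto_comp hodd_tendsto ?_
    have hodd (k : ℕ) : ¬Even (2 * k + 1) := Nat.not_even_two_mul_add_one k
    simpa [Function.comp_def, hheight, hodd] using
      tendsto_log_factorial_add_one_div_log.comp hodd_tendsto
end
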